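/- arXiv:1604.03400 — 3 statements merged into one kernel-verified Lean document; each statement's English description precedes it below -/
import Mathlib

section
/- Convergence of the discrete adhesion energy of interpolants: Let ψ, v : ℝ → ℝ be twice continuously differentiable and 1-periodic with v(x) ≥ ψ(x) for all x, and let γ > 0 and let ζ be a regularizer. Let Nₙ → ∞ be integers, hₙ = 1/Nₙ, and δₙ > 0 with δₙ → 0 and hₙ²/δₙ → 0. Then A_{hₙ,δₙ}[Π_{hₙ} v] → γ · ∫_{{x ∈ (0,1) : v(x) = ψ(x)}} √(1 + v'(x)²) dx as n → ∞. -/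
open Filter MeasureTheory

noncomputable section

/-- mesh point `x_j = j·h` with `h = 1/N`. -/
def xj (N : ℕ) (j : ℤ) : ℝ := j * ((1 : ℝ) / N)

/-- first difference quotient `d_j = (v_j − v_{j−1})/h`. -/
def dq (N : ℕ) (v : ℤ → ℝ) (j : ℤ) : ℝ := (v j - v (j - 1)) / ((1 : ℝ) / N)

/-- second difference quotient `D_j = (v_{j+1} − 2v_j + v_{j−1})/h²`. -/
def Dq (N : ℕ) (v : ℤ → ℝ) (j : ℤ) : ℝ :=
  (v (j + 1) - 2 * v j + v (j - 1)) / ((1 : ℝ) / N) ^ 2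

/-- half segment length `l_j = (h/2)·√(1 + d_j²)`. -/
def lq (N : ℕ) (v : ℤ → ℝ) (j : ℤ) : ℝ :=
  ((1 : ℝ) / N) / 2 * Real.sqrt (1 + dq N v j ^ 2)

/-- angle `θ_j` between consecutive segments. -/
def θq (N : ℕ) (v : ℤ → ℝ) (j : ℤ) : ℝ :=
  Real.arccos ((1 + dq N v j * dq N v (j + 1)) /
    (Real.sqrt (1 + dq N v j ^ 2) * Real.sqrt (1 + dq N v (j + 1) ^ 2)))

/-- discrete bending energy `B_h`. -/
def Bh (C : ℝ) (N : ℕ) (v : ℤ → ℝ) : ℝ :=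
  C / 2 * ∑ j ∈ Finset.Icc (1 : ℤ) N, θq N v j ^ 2 *
    ((lq N v j ^ 3 + lq N v (j + 1) ^ 3) /
      (lq N v j * lq N v (j + 1) * (lq N v j + lq N v (j + 1)) ^ 2))

/-- discrete tension `T_h`. -/
def Th (σ : ℝ) (N : ℕ) (v : ℤ → ℝ) : ℝ :=
  σ * ∑ j ∈ Finset.Icc (1 : ℤ) N, 2 * lq N v j

/-- a regularizer `ζ`. -/
def IsRegularizer (ζ : ℝ → ℝ) : Prop :=
  ContDiff ℝ 1 ζ ∧ (∀ t, 0 ≤ ζ t ∧ ζ t ≤ 1) ∧ (∀ t, ζ (-t) = ζ t) ∧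
    (∀ t, 1 < t → ζ t = 0) ∧ AntitoneOn ζ (Set.Icc 0 1) ∧ ζ 0 = 1

/-- discrete adhesion energy `A_{h,δ}` (with `ζ_δ(t) = ζ(t/δ)`). -/
def Ah (γ : ℝ) (ζ : ℝ → ℝ) (δ : ℝ) (ψ : ℝ → ℝ) (N : ℕ) (v : ℤ → ℝ) : ℝ :=
  γ * ∑ j ∈ Finset.Icc (1 : ℤ) N,
    ζ ((v (j - 1) - ψ (xj N (j - 1))) / δ) * ζ ((v j - ψ (xj N j)) / δ) * (2 * lq N v j)

/-- discrete penalty `P_{h,ρ}`. -/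
def Ph (ρ : ℝ) (ψ : ℝ → ℝ) (N : ℕ) (v : ℤ → ℝ) : ℝ :=
  1 / ρ * ∑ j ∈ Finset.Icc (1 : ℤ) N, max (ψ (xj N j) - v j) 0 ^ 2 * ((1 : ℝ) / N)

/-- total discrete energy `E_{h,δ,ρ}`. -/
def Eh (C σ γ : ℝ) (ζ ψ : ℝ → ℝ) (N : ℕ) (δ ρ : ℝ) (v : ℤ → ℝ) : ℝ :=
  Bh C N v + Th σ N v - Ah γ ζ δ ψ N v + Ph ρ ψ N v

/-- piecewise-affine interpolant of a discrete curve: on `[x_{j−1}, x_j]` it is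
`v_{j−1} + d_j·(x − x_{j−1})`. -/
def interp (N : ℕ) (v : ℤ → ℝ) (x : ℝ) : ℝ :=
  v (⌈x * N⌉ - 1) + dq N v ⌈x * N⌉ * (x - xj N (⌈x * N⌉ - 1))

/-- slope step function of a discrete curve: equal to `d_j` on `(x_{j−1}, x_j)`. -/
def slopeFn (N : ℕ) (v : ℤ → ℝ) (x : ℝ) : ℝ := dq N v ⌈x * N⌉

/-!
Write `g = v - ψ ≥ 0`. Then `A_{h,δ}[Π_h v] = γ ∫₀¹ F_h`, where `F_h` is the step function equal
on `(x_{j-1}, x_j]` to `ζ_δ(g(x_{j-1})) ζ_δ(g(x_j)) √(1 + d_j²)`. The `F_h` are bounded uniformly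
by `√(1 + sup |v'|²)`, so by dominated convergence it suffices to show that `F_h(x)` tends to
`√(1 + v'(x)²)` on the contact set and to `0` off it. The slopes `d_j` at the cell containing `x`
tend to `v'(x)` by strict differentiability. Off the contact set `g(x_j)/δ → ∞`, so the cut-off
`ζ_δ` vanishes eventually. On it, `x` is a minimum of `g`, hence `g(y) = O((y - x)²)`, and
`g(x_j)/δ = O(h²/δ) → 0` gives `ζ_δ(g(x_j)) → ζ(0) = 1`.
-/

open Set Asymptotics Topology

lemma xj_sub_xj_sub_one (N : ℕ) (j : ℤ) : xj N j - xj N (j - 1) = 1 / N := by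
  simp only [xj]; push_cast; ring

lemma dq_comp_xj (N : ℕ) (f : ℝ → ℝ) (j : ℤ) :
    dq N (fun i => f (xj N i)) j = slope f (xj N (j - 1)) (xj N j) := by
  rw [dq, slope_def_field, xj_sub_xj_sub_one]

lemma xj_ceil_sub_one_lt {N : ℕ} (hN : N ≠ 0) (x : ℝ) : xj N (⌈x * N⌉ - 1) < x := by
  have hN' : (0 : ℝ) < N := by positivity
  rw [xj, mul_one_div, div_lt_iff₀ hN']
  push_cast
  linarith [Int.ceil_lt_add_one (x * N)]

lemma le_xj_ceil {N : ℕ} (hN : N ≠ 0) (x : ℝ) : x ≤ xj N ⌈x * N⌉ := by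
  have hN' : (0 : ℝ) < N := by positivity
  rw [xj, mul_one_div, le_div_iff₀ hN']
  exact Int.le_ceil _

lemma abs_xj_ceil_sub_one_sub_le {N : ℕ} (hN : N ≠ 0) (x : ℝ) :
    |xj N (⌈x * N⌉ - 1) - x| ≤ 1 / N := by
  have := xj_sub_xj_sub_one N ⌈x * N⌉
  rw [abs_le]
  constructor <;> linarith [xj_ceil_sub_one_lt hN x, le_xj_ceil hN x]

lemma abs_xj_ceil_sub_le {N : ℕ} (hN : N ≠ 0) (x : ℝ) : |xj N ⌈x * N⌉ - x| ≤ 1 / N := by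
  have := xj_sub_xj_sub_one N ⌈x * N⌉
  rw [abs_le]
  constructor <;> linarith [xj_ceil_sub_one_lt hN x, le_xj_ceil hN x]

lemma eqOn_comp_ceil (c : ℤ → ℝ) (k : ℤ) :
    EqOn (fun t : ℝ => c ⌈t⌉) (fun _ => c (k + 1)) (Ioc (k : ℝ) (k + 1)) := fun t ht => by
  change c ⌈t⌉ = c (k + 1)
  rw [(Int.ceil_eq_iff (z := k + 1)).mpr
    ⟨by push_cast; linarith [ht.1], by push_cast; exact ht.2⟩]

lemma intervalIntegrable_comp_ceil (c : ℤ → ℝ) (k : ℤ) :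
    IntervalIntegrable (fun t : ℝ => c ⌈t⌉) volume (k : ℝ) (k + 1) :=
  (intervalIntegrable_iff_integrableOn_Ioc_of_le (by linarith)).mpr <|
    (integrableOn_const measure_Ioc_lt_top.ne).congr_fun (eqOn_comp_ceil c k).symm
      measurableSet_Ioc

lemma intervalIntegral_comp_ceil (c : ℤ → ℝ) (k : ℤ) :
    ∫ t in (k : ℝ)..(k + 1), c ⌈t⌉ = c (k + 1) := by
  rw [intervalIntegral.integral_of_le (by linarith),
    setIntegral_congr_fun measurableSet_Ioc (eqOn_comp_ceil c k)]
  simp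

lemma sum_range_eq_sum_Icc_one (c : ℤ → ℝ) (N : ℕ) :
    ∑ k ∈ Finset.range N, c ((k : ℤ) + 1) = ∑ j ∈ Finset.Icc (1 : ℤ) N, c j := by
  refine Finset.sum_nbij' (fun k => (k : ℤ) + 1) (fun j => (j - 1).toNat) ?_ ?_ ?_ ?_ ?_ <;>
    intros <;> simp_all <;> omega

lemma integral_comp_ceil_zero_nat (c : ℤ → ℝ) (N : ℕ) :
    ∫ t in (0 : ℝ)..N, c ⌈t⌉ = ∑ j ∈ Finset.Icc (1 : ℤ) N, c j := by
  have h := intervalIntegral.sum_integral_adjacent_intervals (f := fun t : ℝ => c ⌈t⌉)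
    (μ := volume) (a := fun k : ℕ => (k : ℝ)) (n := N) fun k _ => by
      simpa using intervalIntegrable_comp_ceil c k
  simp only [Nat.cast_zero] at h
  rw [← h, ← sum_range_eq_sum_Icc_one]
  refine Finset.sum_congr rfl fun k _ => ?_
  simpa using intervalIntegral_comp_ceil c k

lemma setIntegral_Ioc_comp_ceil_mul (c : ℤ → ℝ) {N : ℕ} (hN : N ≠ 0) :
    ∫ x in Ioc (0 : ℝ) 1, c ⌈x * N⌉ = ∑ j ∈ Finset.Icc (1 : ℤ) N, c j * (1 / N) := by
  rw [← intervalIntegral.integral_of_le zero_le_one,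
    intervalIntegral.integral_comp_mul_right (fun t => c ⌈t⌉) (by positivity),
    zero_mul, one_mul, integral_comp_ceil_zero_nat, smul_eq_mul, Finset.mul_sum]
  simp only [mul_comm, one_div]

lemma tendsto_of_abs_sub_le {α : Type*} {l : Filter α} {a h : α → ℝ} {x : ℝ}
    (hh : Tendsto h l (𝓝 0)) (ha : ∀ᶠ n in l, |a n - x| ≤ h n) : Tendsto a l (𝓝 x) :=
  tendsto_iff_norm_sub_tendsto_zero.mpr <|
    squeeze_zero' (Eventually.of_forall fun _ => norm_nonneg _) ha hh

lemma HasStrictDerivAt.tendsto_slope {α : Type*} {l : Filter α} {f : ℝ → ℝ} {f' x : ℝ}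
    (hf : HasStrictDerivAt f f' x) {a b : α → ℝ} (ha : Tendsto a l (𝓝 x))
    (hb : Tendsto b l (𝓝 x)) (hab : ∀ᶠ n in l, a n ≠ b n) :
    Tendsto (fun n => slope f (a n) (b n)) l (𝓝 f') := by
  have h := ((hasDerivAtFilter_iff_isLittleO.mp hf).comp_tendsto
    (hb.prodMk_nhds ha)).tendsto_div_nhds_zero
  refine tendsto_sub_nhds_zero_iff.mp (h.congr' ?_)
  filter_upwards [hab] with n hn
  have : b n - a n ≠ 0 := sub_ne_zero.mpr hn.symm
  simp only [Function.comp_apply, smul_eq_mul, slope_def_field]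
  field_simp

lemma isBigO_sub_sq_of_deriv_eq_zero {g : ℝ → ℝ} {x : ℝ} (hg : Differentiable ℝ g)
    (hg' : DifferentiableAt ℝ (deriv g) x) (hgx : deriv g x = 0) :
    (fun y => g y - g x) =O[𝓝 x] fun y => (y - x) ^ 2 := by
  obtain ⟨c, hc, hbound⟩ := hg'.hasDerivAt.isBigO_sub.exists_pos
  obtain ⟨ε, hε, hball⟩ := Metric.eventually_nhds_iff_ball.mp hbound.bound
  refine IsBigO.of_bound c ?_
  filter_upwards [Metric.ball_mem_nhds x hε] with y hy
  have hsub : Metric.closedBall x (dist y x) ⊆ Metric.ball x ε :=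
    Metric.closedBall_subset_ball hy
  have hderiv : ∀ z ∈ Metric.closedBall x (dist y x), ‖deriv g z‖ ≤ c * ‖y - x‖ := by
    intro z hz
    have := hball z (hsub hz)
    rw [hgx, sub_zero] at this
    refine this.trans (mul_le_mul_of_nonneg_left ?_ hc.le)
    simpa [← dist_eq_norm] using hz
  calc ‖g y - g x‖ ≤ c * ‖y - x‖ * ‖y - x‖ :=
        (convex_closedBall x _).norm_image_sub_le_of_norm_deriv_le (fun z _ => hg z) hderiv
          (Metric.mem_closedBall_self dist_nonneg) (by simp [Metric.mem_closedBall])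
    _ = c * ‖(y - x) ^ 2‖ := by rw [norm_pow]; ring

lemma tendsto_div_of_isBigO_sub_sq {α : Type*} {l : Filter α} {g : ℝ → ℝ} {x : ℝ}
    (hg : g =O[𝓝 x] fun y => (y - x) ^ 2) {y h δ : α → ℝ} (hh : Tendsto h l (𝓝 0))
    (hy : ∀ᶠ n in l, |y n - x| ≤ h n) (hδ : ∀ᶠ n in l, 0 ≤ δ n)
    (hhδ : Tendsto (fun n => h n ^ 2 / δ n) l (𝓝 0)) :
    Tendsto (fun n => g (y n) / δ n) l (𝓝 0) := by
  have hgy := (hg.comp_tendsto (tendsto_of_abs_sub_le hh hy)).mul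
    (isBigO_refl (fun n => (δ n)⁻¹) l)
  refine (hgy.trans ?_).trans_tendsto hhδ
  refine IsBigO.of_bound 1 ?_
  filter_upwards [hy, hδ] with n hyn hδn
  rw [one_mul, Real.norm_eq_abs, Real.norm_eq_abs, Function.comp_apply, abs_mul, abs_inv,
    abs_of_nonneg hδn, abs_pow, abs_of_nonneg (div_nonneg (sq_nonneg _) hδn), div_eq_mul_inv]
  gcongr

lemma abs_slope_le {f : ℝ → ℝ} {s : Set ℝ} {C : ℝ} (hs : Convex ℝ s)
    (hf : ∀ x ∈ s, DifferentiableAt ℝ f x) (hC : ∀ x ∈ s, |deriv f x| ≤ C) {a b : ℝ}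
    (ha : a ∈ s) (hb : b ∈ s) : |slope f a b| ≤ C := by
  have hsub := hs.norm_image_sub_le_of_norm_deriv_le hf hC ha hb
  rw [slope_def_field, abs_div]
  exact div_le_of_le_mul₀ (abs_nonneg _) ((abs_nonneg _).trans (hC a ha)) hsub

def adhesionStep (ζ ψ v : ℝ → ℝ) (δ : ℝ) (N : ℕ) (j : ℤ) : ℝ :=
  ζ ((v (xj N (j - 1)) - ψ (xj N (j - 1))) / δ) * ζ ((v (xj N j) - ψ (xj N j)) / δ) *
    √(1 + slope v (xj N (j - 1)) (xj N j) ^ 2)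

lemma Ah_eq_setIntegral (γ : ℝ) (ζ ψ v : ℝ → ℝ) (δ : ℝ) {N : ℕ} (hN : N ≠ 0) :
    Ah γ ζ δ ψ N (fun j => v (xj N j)) =
      γ * ∫ x in Ioc (0 : ℝ) 1, adhesionStep ζ ψ v δ N ⌈x * N⌉ := by
  rw [setIntegral_Ioc_comp_ceil_mul _ hN, Ah]
  congr 1
  refine Finset.sum_congr rfl fun j _ => ?_
  rw [adhesionStep, lq, dq_comp_xj]
  ring

lemma abs_adhesionStep_le {ζ : ℝ → ℝ} (hζ : IsRegularizer ζ) (ψ v : ℝ → ℝ) (δ : ℝ) (N : ℕ)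
    (j : ℤ) {M : ℝ} (hM : |slope v (xj N (j - 1)) (xj N j)| ≤ M) :
    |adhesionStep ζ ψ v δ N j| ≤ √(1 + M ^ 2) := by
  obtain ⟨-, hζ01, -⟩ := hζ
  rw [adhesionStep, abs_mul, abs_mul, abs_of_nonneg (hζ01 _).1, abs_of_nonneg (hζ01 _).1,
    abs_of_nonneg (Real.sqrt_nonneg _)]
  calc _ ≤ 1 * 1 * √(1 + slope v (xj N (j - 1)) (xj N j) ^ 2) := by
        gcongr
        exacts [(hζ01 _).1, (hζ01 _).2, (hζ01 _).2]
    _ ≤ √(1 + M ^ 2) := by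
        rw [one_mul, one_mul]
        have := sq_le_sq' (abs_le.mp hM).1 (abs_le.mp hM).2
        gcongr

lemma tendsto_adhesionStep_ceil {ζ ψ v : ℝ → ℝ} (hζ : IsRegularizer ζ) (hψ : ContDiff ℝ 2 ψ)
    (hv : ContDiff ℝ 2 v) (hvψ : ∀ x, ψ x ≤ v x) {Nn : ℕ → ℕ} (hNn : Tendsto Nn atTop atTop)
    {δn : ℕ → ℝ} (hδpos : ∀ n, 0 < δn n) (hδ : Tendsto δn atTop (𝓝 0))
    (hratio : Tendsto (fun n => ((1 : ℝ) / Nn n) ^ 2 / δn n) atTop (𝓝 0)) (x : ℝ) :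
    Tendsto (fun n => adhesionStep ζ ψ v (δn n) (Nn n) ⌈x * Nn n⌉) atTop
      (𝓝 ({y | v y = ψ y}.indicator (fun y => √(1 + deriv v y ^ 2)) x)) := by
  obtain ⟨hζC, -, -, hζzero, -, hζone⟩ := hζ
  set a := fun n => xj (Nn n) (⌈x * Nn n⌉ - 1)
  set b := fun n => xj (Nn n) ⌈x * Nn n⌉
  set g := fun y => v y - ψ y with hg
  have hgC : ContDiff ℝ 2 g := hv.sub hψ
  have hNpos : ∀ᶠ n in atTop, Nn n ≠ 0 := hNn.eventually_ne_atTop 0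
  have hh : Tendsto (fun n => (1 : ℝ) / Nn n) atTop (𝓝 0) :=
    tendsto_one_div_atTop_nhds_zero_nat.comp hNn
  have ha_le : ∀ᶠ n in atTop, |a n - x| ≤ 1 / Nn n :=
    hNpos.mono fun n hn => abs_xj_ceil_sub_one_sub_le hn x
  have hb_le : ∀ᶠ n in atTop, |b n - x| ≤ 1 / Nn n :=
    hNpos.mono fun n hn => abs_xj_ceil_sub_le hn x
  have ha := tendsto_of_abs_sub_le hh ha_le
  have hab : ∀ᶠ n in atTop, a n ≠ b n := hNpos.mono fun n hn => by
    have := xj_sub_xj_sub_one (Nn n) ⌈x * Nn n⌉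
    have : (0 : ℝ) < 1 / Nn n := by positivity
    exact ne_of_lt (by linarith)
  have hlength : Tendsto (fun n => √(1 + slope v (a n) (b n) ^ 2)) atTop
      (𝓝 √(1 + deriv v x ^ 2)) :=
    (tendsto_const_nhds.add (((hv.hasStrictDerivAt two_ne_zero).tendsto_slope ha
      (tendsto_of_abs_sub_le hh hb_le) hab).pow 2)).sqrt
  by_cases hx : v x = ψ x
  · have hgO : g =O[𝓝 x] fun y => (y - x) ^ 2 := by
      have hmin : IsLocalMin g x := Eventually.of_forall fun y => by
        simp only [hg, hx, sub_self, sub_nonneg, hvψ y]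
      simpa [hg, hx] using isBigO_sub_sq_of_deriv_eq_zero (hgC.differentiable two_ne_zero)
        ((hgC.deriv' (n := 1)).differentiable one_ne_zero x) hmin.deriv_eq_zero
    have hζ_one : ∀ y : ℕ → ℝ, (∀ᶠ n in atTop, |y n - x| ≤ 1 / Nn n) →
        Tendsto (fun n => ζ (g (y n) / δn n)) atTop (𝓝 1) := fun y hy => by
      rw [← hζone]
      exact (hζC.continuous.tendsto 0).comp <| tendsto_div_of_isBigO_sub_sq hgO hh hy
        (Eventually.of_forall fun n => (hδpos n).le) hratio
    have hlim := ((hζ_one a ha_le).mul (hζ_one b hb_le)).mul hlength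
    rw [one_mul, one_mul] at hlim
    rwa [Set.indicator_of_mem (show x ∈ {y | v y = ψ y} from hx)]
  · have hgx : 0 < g x := sub_pos.mpr ((hvψ x).lt_of_ne (Ne.symm hx))
    have hδ' : Tendsto δn atTop (𝓝[>] 0) :=
      tendsto_nhdsWithin_iff.mpr ⟨hδ, Eventually.of_forall hδpos⟩
    have hgap : Tendsto (fun n => g (a n) / δn n) atTop atTop :=
      ((hgC.continuous.tendsto x).comp ha).pos_mul_atTop hgx (tendsto_inv_nhdsGT_zero.comp hδ')
    rw [Set.indicator_of_notMem (show x ∉ {y | v y = ψ y} from hx)]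
    refine tendsto_const_nhds.congr' ?_
    filter_upwards [hgap.eventually_gt_atTop 1] with n hn
    change 0 = ζ (g (a n) / δn n) * _ * _
    rw [hζzero _ hn, zero_mul, zero_mul]

theorem stmt6_general (ψ : ℝ → ℝ) (hψ : ContDiff ℝ 2 ψ)
    (v : ℝ → ℝ) (hv : ContDiff ℝ 2 v)
    (hvψ : ∀ x, ψ x ≤ v x)
    (γ : ℝ) (ζ : ℝ → ℝ) (hζ : IsRegularizer ζ)
    (Nn : ℕ → ℕ) (hNn : Tendsto Nn atTop atTop)
    (δn : ℕ → ℝ) (hδpos : ∀ n, 0 < δn n) (hδ : Tendsto δn atTop (nhds 0))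
    (hratio : Tendsto (fun n => ((1 : ℝ) / Nn n) ^ 2 / δn n) atTop (nhds 0)) :
    Tendsto (fun n => Ah γ ζ (δn n) ψ (Nn n) (fun j : ℤ => v (xj (Nn n) j))) atTop
      (nhds (γ * ∫ x in {x | x ∈ Set.Ioo (0 : ℝ) 1 ∧ v x = ψ x},
        Real.sqrt (1 + deriv v x ^ 2))) := by
  have hNpos : ∀ᶠ n in atTop, Nn n ≠ 0 := hNn.eventually_ne_atTop 0
  obtain ⟨M, hM⟩ := isCompact_Icc.exists_bound_of_continuousOn (s := Icc (-1 : ℝ) 2)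
    (hv.continuous_deriv one_le_two).continuousOn
  have hdom : Tendsto (fun n => ∫ x in Ioo (0 : ℝ) 1, adhesionStep ζ ψ v (δn n) (Nn n) ⌈x * Nn n⌉)
      atTop (𝓝 (∫ x in Ioo (0 : ℝ) 1,
        {y | v y = ψ y}.indicator (fun y => √(1 + deriv v y ^ 2)) x)) := by
    refine tendsto_integral_filter_of_dominated_convergence (fun _ => √(1 + M ^ 2))
      (Eventually.of_forall fun n =>
        ((measurable_of_countable (adhesionStep ζ ψ v (δn n) (Nn n))).comp
          (Int.measurable_ceil.comp (measurable_id.mul_const _))).aestronglyMeasurable) ?_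
      (integrableOn_const measure_Ioo_lt_top.ne)
      (Eventually.of_forall (tendsto_adhesionStep_ceil hζ hψ hv hvψ hNn hδpos hδ hratio))
    filter_upwards [hNpos] with n hn
    refine ae_restrict_of_forall_mem measurableSet_Ioo fun x hx => ?_
    have hmem : ∀ y, |y - x| ≤ 1 / Nn n → y ∈ Icc (-1 : ℝ) 2 := fun y hy => by
      have hh : (1 : ℝ) / Nn n ≤ 1 :=
        div_le_one_of_le₀ (by exact_mod_cast Nat.one_le_iff_ne_zero.mpr hn) (Nat.cast_nonneg _)
      have := abs_le.mp (hy.trans hh)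
      constructor <;> linarith [hx.1, hx.2]
    exact abs_adhesionStep_le hζ ψ v _ _ _ <| abs_slope_le (convex_Icc (-1) 2)
      (fun y _ => hv.differentiable two_ne_zero y) hM
      (hmem _ (abs_xj_ceil_sub_one_sub_le hn x)) (hmem _ (abs_xj_ceil_sub_le hn x))
  rw [setIntegral_indicator (measurableSet_eq_fun hv.continuous.measurable
    hψ.continuous.measurable)] at hdom
  refine (hdom.const_mul γ).congr' ?_
  filter_upwards [hNpos] with n hn
  rw [Ah_eq_setIntegral γ ζ ψ v _ hn, integral_Ioc_eq_integral_Ioo]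

/-- Convergence of the discrete adhesion energy of the interpolants `Π_{hₙ} v`. -/
theorem stmt6 (ψ : ℝ → ℝ) (hψ : ContDiff ℝ 2 ψ) (hψper : ∀ x, ψ (x + 1) = ψ x)
    (v : ℝ → ℝ) (hv : ContDiff ℝ 2 v) (hvper : ∀ x, v (x + 1) = v x)
    (hvψ : ∀ x, ψ x ≤ v x)
    (γ : ℝ) (hγ : 0 < γ) (ζ : ℝ → ℝ) (hζ : IsRegularizer ζ)
    (Nn : ℕ → ℕ) (hNn : Tendsto Nn atTop atTop)
    (δn : ℕ → ℝ) (hδpos : ∀ n, 0 < δn n) (hδ : Tendsto δn atTop (nhds 0))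
    (hratio : Tendsto (fun n => ((1 : ℝ) / Nn n) ^ 2 / δn n) atTop (nhds 0)) :
    Tendsto (fun n => Ah γ ζ (δn n) ψ (Nn n) (fun j : ℤ => v (xj (Nn n) j))) atTop
      (nhds (γ * ∫ x in {x | x ∈ Set.Ioo (0 : ℝ) 1 ∧ v x = ψ x},
        Real.sqrt (1 + deriv v x ^ 2))) :=
  stmt6_general ψ hψ v hv hvψ γ ζ hζ Nn hNn δn hδpos hδ hratio

end
end

section
/- Discrete coercivity of the bending energy under a slope bound: Let N ≥ 1 be an integer, h = 1/N, let v = (v_j) be a discrete curve, and let S > 0 be such that |d_j| ≤ S for all j. Then Σ_{j=1}^N θ_j²·(l_j³ + l_{j+1}³)/(l_j·l_{j+1}·(l_j + l_{j+1})²) ≥ (1 + S²)^{−5/2} · Σ_{j=1}^N D_j² · h. -/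
open Filter MeasureTheory

noncomputable section

/-
The angle θ between consecutive segments, with slopes a and b, satisfies
sin θ = |b - a| / (√(1 + a²) √(1 + b²)) (Lagrange's identity), so θ ≥ |b - a| / (1 + S²).
The length weight (l³ + l'³) / (l l' (l + l')²) is at least 1 / (l + l') ≥ 1 / (h √(1 + S²)).
Multiplying, each summand of the bending energy dominates (1 + S²)^(-5/2) · D_j² · h.
-/

open Real

lemma one_div_add_le_cube_weight {x y : ℝ} (hx : 0 < x) (hy : 0 < y) :
    1 / (x + y) ≤ (x ^ 3 + y ^ 3) / (x * y * (x + y) ^ 2) := by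
  rw [div_le_div_iff₀ (by positivity) (by positivity)]
  nlinarith [mul_nonneg (mul_pos hx hy).le (mul_nonneg (add_pos hx hy).le (sq_nonneg (x - y)))]

lemma sq_sub_div_le_arccos_sq (a b : ℝ) :
    ((b - a) / (√(1 + a ^ 2) * √(1 + b ^ 2))) ^ 2 ≤
      arccos ((1 + a * b) / (√(1 + a ^ 2) * √(1 + b ^ 2))) ^ 2 := by
  set A := √(1 + a ^ 2)
  set B := √(1 + b ^ 2)
  have hA : A ^ 2 = 1 + a ^ 2 := sq_sqrt (by positivity)
  have hB : B ^ 2 = 1 + b ^ 2 := sq_sqrt (by positivity)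
  have hAB : 0 < A * B := by positivity
  have lagrange : 1 - ((1 + a * b) / (A * B)) ^ 2 = ((b - a) / (A * B)) ^ 2 := by
    rw [div_pow, div_pow, mul_pow, hA, hB]
    field_simp
    ring
  have hsin : sin (arccos ((1 + a * b) / (A * B))) = |b - a| / (A * B) := by
    rw [sin_arccos, lagrange, sqrt_sq_eq_abs, abs_div, abs_of_pos hAB]
  rw [← sq_abs, abs_div, abs_of_pos hAB, ← hsin]
  exact pow_le_pow_left₀ (sin_nonneg_of_nonneg_of_le_pi (arccos_nonneg _) (arccos_le_pi _))
    (sin_le (arccos_nonneg _)) 2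

lemma sqrt_one_add_sq_le {a S : ℝ} (ha : |a| ≤ S) : √(1 + a ^ 2) ≤ √(1 + S ^ 2) :=
  sqrt_le_sqrt (add_le_add_right (sq_le_sq' (neg_le_of_abs_le ha) (le_of_abs_le ha)) 1)

lemma sq_sub_div_mul_le_bending_term {h a b S : ℝ} (hh : 0 < h) (ha : |a| ≤ S) (hb : |b| ≤ S) :
    (√(1 + S ^ 2) ^ 5)⁻¹ * (((b - a) / h) ^ 2 * h) ≤
      arccos ((1 + a * b) / (√(1 + a ^ 2) * √(1 + b ^ 2))) ^ 2 *
        (((h / 2 * √(1 + a ^ 2)) ^ 3 + (h / 2 * √(1 + b ^ 2)) ^ 3) /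
          (h / 2 * √(1 + a ^ 2) * (h / 2 * √(1 + b ^ 2)) *
            (h / 2 * √(1 + a ^ 2) + h / 2 * √(1 + b ^ 2)) ^ 2)) := by
  set A := √(1 + a ^ 2)
  set B := √(1 + b ^ 2)
  set M := √(1 + S ^ 2)
  have hA : 0 < A := sqrt_pos.mpr (by positivity)
  have hB : 0 < B := sqrt_pos.mpr (by positivity)
  have hAM : A ≤ M := sqrt_one_add_sq_le ha
  have hBM : B ≤ M := sqrt_one_add_sq_le hb
  calc (M ^ 5)⁻¹ * (((b - a) / h) ^ 2 * h)
      = (b - a) ^ 2 / (M ^ 2) ^ 2 * (1 / (h / 2 * M + h / 2 * M)) := by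
        field_simp
        ring
    _ ≤ (b - a) ^ 2 / (A * B) ^ 2 * (1 / (h / 2 * A + h / 2 * B)) := by
        gcongr
        · nlinarith
    _ = ((b - a) / (A * B)) ^ 2 * (1 / (h / 2 * A + h / 2 * B)) := by rw [div_pow]
    _ ≤ _ := mul_le_mul (sq_sub_div_le_arccos_sq a b)
        (one_div_add_le_cube_weight (by positivity) (by positivity)) (by positivity) (by positivity)

lemma rpow_neg_div_two_eq_inv_sqrt_pow {x : ℝ} (hx : 0 ≤ x) (n : ℕ) :
    x ^ (-(n : ℝ) / 2) = (√x ^ n)⁻¹ := by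
  rw [sqrt_eq_rpow, ← rpow_natCast, ← rpow_mul hx, neg_div, rpow_neg hx]
  ring_nf

lemma Dq_eq_sub_dq_div (N : ℕ) (v : ℤ → ℝ) (j : ℤ) :
    Dq N v j = (dq N v (j + 1) - dq N v j) / (1 / N) := by
  rw [Dq, dq, dq, ← sub_div, div_div, ← sq, add_sub_cancel_right]
  ring_nf

theorem stmt11_general (N : ℕ) (hN : 1 ≤ N) (v : ℤ → ℝ)
    (S : ℝ) (hd : ∀ j, |dq N v j| ≤ S) :
    (1 + S ^ 2) ^ (-(5 : ℝ) / 2) *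
        ∑ j ∈ Finset.Icc (1 : ℤ) (N : ℤ), Dq N v j ^ 2 * ((1 : ℝ) / N) ≤
      ∑ j ∈ Finset.Icc (1 : ℤ) (N : ℤ),
        θq N v j ^ 2 * ((lq N v j ^ 3 + lq N v (j + 1) ^ 3) /
          (lq N v j * lq N v (j + 1) * (lq N v j + lq N v (j + 1)) ^ 2)) := by
  have hh : (0 : ℝ) < 1 / N := by positivity
  have hweight : (1 + S ^ 2) ^ (-(5 : ℝ) / 2) = (√(1 + S ^ 2) ^ 5)⁻¹ := by
    exact_mod_cast rpow_neg_div_two_eq_inv_sqrt_pow (by positivity : (0 : ℝ) ≤ 1 + S ^ 2) 5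
  rw [hweight, Finset.mul_sum]
  refine Finset.sum_le_sum fun j _ => ?_
  rw [Dq_eq_sub_dq_div]
  exact sq_sub_div_mul_le_bending_term hh (hd j) (hd (j + 1))

/-- Discrete coercivity of the bending energy under a slope bound. -/
theorem stmt11 (N : ℕ) (hN : 1 ≤ N) (v : ℤ → ℝ) (hper : ∀ j, v (j + N) = v j)
    (S : ℝ) (hS : 0 < S) (hd : ∀ j, |dq N v j| ≤ S) :
    (1 + S ^ 2) ^ (-(5 : ℝ) / 2) *
        ∑ j ∈ Finset.Icc (1 : ℤ) (N : ℤ), Dq N v j ^ 2 * ((1 : ℝ) / N) ≤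
      ∑ j ∈ Finset.Icc (1 : ℤ) (N : ℤ),
        θq N v j ^ 2 * ((lq N v j ^ 3 + lq N v (j + 1) ^ 3) /
          (lq N v j * lq N v (j + 1) * (lq N v j + lq N v (j + 1)) ^ 2)) :=
  stmt11_general N hN v S hd
end
end

section
/- Uniform bound on the discrete adhesion energy: Let ψ : ℝ → ℝ be continuously differentiable and 1-periodic, let γ, c₀ > 0, let ζ be a regularizer, let N ≥ 1, h = 1/N, and let δ > 0 satisfy δ ≤ c₀·h. Then for every discrete curve v, A_{h,δ}[v] ≤ 4γ·(∫₀¹ √(1 + ψ'(x)²) dx + c₀). -/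
/-! Only cells whose two endpoints both lie within `δ` of the obstacle contribute, each with
weight at most `1`. On such a cell the triangle inequality in the plane bounds the segment length
`2 l_j` by `2δ` plus the chord of the graph of `ψ` over the cell, and the chord is at most the arc
length `∫ √(1 + ψ'²)` over the cell. Summing over the `N` cells gives
`A_{h,δ}[v] ≤ γ (2 N δ + ∫₀¹ √(1 + ψ'²))`, and `N δ ≤ c₀`. Points of the plane are written as
complex numbers `⟨x, y⟩`. -/

open Filter MeasureTheory

noncomputable section

open Complex in
theorem norm_mk_sub_mk_le_integral_sqrt_one_add_deriv_sq {ψ : ℝ → ℝ} (hψ : ContDiff ℝ 1 ψ)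
    {a b : ℝ} (hab : a ≤ b) :
    ‖(⟨b, ψ b⟩ : ℂ) - ⟨a, ψ a⟩‖ ≤ ∫ x in a..b, √(1 + deriv ψ x ^ 2) := by
  have hψ' : Continuous (deriv ψ) := hψ.continuous_deriv le_rfl
  have hgraph : ∀ x : ℝ, HasDerivAt (fun t : ℝ => (t : ℂ) + ψ t * I) (1 + deriv ψ x * I) x :=
    fun x => ((hasDerivAt_id x).ofReal_comp).add
      (((hψ.differentiable one_ne_zero x).hasDerivAt.ofReal_comp).mul_const I)
  have hnorm : ∀ x : ℝ, ‖(1 : ℂ) + deriv ψ x * I‖ = √(1 + deriv ψ x ^ 2) := fun x => by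
    simp [norm_eq_sqrt_sq_add_sq]
  have hchord : (⟨b, ψ b⟩ : ℂ) - ⟨a, ψ a⟩ = ∫ x in a..b, (1 + deriv ψ x * I) := by
    rw [intervalIntegral.integral_eq_sub_of_hasDerivAt (fun x _ => hgraph x)
      ((by fun_prop : Continuous fun x : ℝ => (1 : ℂ) + deriv ψ x * I).intervalIntegrable _ _)]
    apply Complex.ext <;> simp
  rw [hchord]
  refine (intervalIntegral.norm_integral_le_integral_norm hab).trans_eq ?_
  simp only [hnorm]

theorem two_mul_lq_eq_norm {N : ℕ} (hN : N ≠ 0) (v : ℤ → ℝ) (j : ℤ) :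
    2 * lq N v j = ‖(⟨xj N j, v j⟩ : ℂ) - ⟨xj N (j - 1), v (j - 1)⟩‖ := by
  have hN' : (0 : ℝ) < N := by positivity
  have hsq : (xj N j - xj N (j - 1)) ^ 2 + (v j - v (j - 1)) ^ 2
      = ((1 : ℝ) / N) ^ 2 * (1 + dq N v j ^ 2) := by
    simp only [xj, dq]; push_cast; field_simp; ring
  rw [Complex.norm_eq_sqrt_sq_add_sq, Complex.sub_re, Complex.sub_im, hsq,
    Real.sqrt_mul' _ (by positivity), Real.sqrt_sq (by positivity), lq]
  ring

namespace IsRegularizer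

theorem eq_zero_of_one_lt_abs {ζ : ℝ → ℝ} (hζ : IsRegularizer ζ) {t : ℝ} (ht : 1 < |t|) :
    ζ t = 0 := by
  obtain ⟨-, -, heven, hvanish, -⟩ := hζ
  rcases le_or_gt 0 t with ht₀ | ht₀
  · exact hvanish t (by rwa [abs_of_nonneg ht₀] at ht)
  · rw [← heven]
    exact hvanish (-t) (by rwa [abs_of_neg ht₀] at ht)

theorem mul_mul_le_of_contact {ζ : ℝ → ℝ} (hζ : IsRegularizer ζ) {δ a b L M : ℝ} (hδ : 0 < δ)
    (hL : 0 ≤ L) (hM : 0 ≤ M) (hLM : |a| ≤ δ → |b| ≤ δ → L ≤ M) :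
    ζ (a / δ) * ζ (b / δ) * L ≤ M := by
  have hvanish : ∀ t, δ < |t| → ζ (t / δ) = 0 := fun t ht =>
    hζ.eq_zero_of_one_lt_abs (by rwa [abs_div, abs_of_pos hδ, one_lt_div hδ])
  obtain ⟨-, hbound, -⟩ := hζ
  by_cases ha : |a| ≤ δ
  · by_cases hb : |b| ≤ δ
    · calc ζ (a / δ) * ζ (b / δ) * L ≤ 1 * L := by
            gcongr
            exact mul_le_one₀ (hbound _).2 (hbound _).1 (hbound _).2
        _ ≤ M := by rw [one_mul]; exact hLM ha hb
    · rwa [hvanish b (not_le.mp hb), mul_zero, zero_mul]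
  · rwa [hvanish a (not_le.mp ha), zero_mul, zero_mul]

end IsRegularizer

theorem xj_sub_one_le (N : ℕ) (j : ℤ) : xj N (j - 1) ≤ xj N j := by
  unfold xj; gcongr; linarith

theorem two_mul_lq_le_of_contact {ψ : ℝ → ℝ} (hψ : ContDiff ℝ 1 ψ) {N : ℕ} (hN : N ≠ 0)
    {v : ℤ → ℝ} {δ : ℝ} {j : ℤ} (h₀ : |v (j - 1) - ψ (xj N (j - 1))| ≤ δ)
    (h₁ : |v j - ψ (xj N j)| ≤ δ) :
    2 * lq N v j ≤ 2 * δ + ∫ x in xj N (j - 1)..xj N j, √(1 + deriv ψ x ^ 2) := by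
  have hvert : ∀ x y z : ℝ, ‖(⟨x, y⟩ : ℂ) - ⟨x, z⟩‖ = |y - z| := fun x y z => by
    simp [Complex.norm_eq_sqrt_sq_add_sq, Real.sqrt_sq_eq_abs]
  set a := xj N (j - 1)
  set b := xj N j
  calc 2 * lq N v j = ‖(⟨b, v j⟩ : ℂ) - ⟨a, v (j - 1)⟩‖ := two_mul_lq_eq_norm hN v j
    _ = ‖((⟨b, v j⟩ : ℂ) - ⟨b, ψ b⟩) + ((⟨b, ψ b⟩ : ℂ) - ⟨a, ψ a⟩)
          + ((⟨a, ψ a⟩ : ℂ) - ⟨a, v (j - 1)⟩)‖ := by ring_nf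
    _ ≤ ‖(⟨b, v j⟩ : ℂ) - ⟨b, ψ b⟩‖ + ‖(⟨b, ψ b⟩ : ℂ) - ⟨a, ψ a⟩‖
          + ‖(⟨a, ψ a⟩ : ℂ) - ⟨a, v (j - 1)⟩‖ := norm_add₃_le
    _ ≤ δ + (∫ x in a..b, √(1 + deriv ψ x ^ 2)) + δ := by
        rw [hvert, hvert, abs_sub_comm (ψ a)]
        gcongr
        exact norm_mk_sub_mk_le_integral_sqrt_one_add_deriv_sq hψ (xj_sub_one_le N j)
    _ = 2 * δ + ∫ x in a..b, √(1 + deriv ψ x ^ 2) := by ring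

theorem sum_Icc_integral_xj {N : ℕ} (hN : N ≠ 0) {f : ℝ → ℝ} (hf : Continuous f) :
    ∑ j ∈ Finset.Icc (1 : ℤ) N, ∫ x in xj N (j - 1)..xj N j, f x = ∫ x in (0 : ℝ)..1, f x := by
  rw [Int.Icc_eq_finset_map, Finset.sum_map]
  calc _ = ∑ i ∈ Finset.range N, ∫ x in xj N (i : ℕ)..xj N ((i + 1 : ℕ)), f x := by
        simp [add_comm]
    _ = ∫ x in xj N (0 : ℕ)..xj N (N : ℕ), f x :=
        intervalIntegral.sum_integral_adjacent_intervals fun _ _ => hf.intervalIntegrable _ _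
    _ = ∫ x in (0 : ℝ)..1, f x := by simp [xj, hN]

theorem Ah_le {ψ : ℝ → ℝ} (hψ : ContDiff ℝ 1 ψ) {γ : ℝ} (hγ : 0 ≤ γ) {ζ : ℝ → ℝ}
    (hζ : IsRegularizer ζ) {N : ℕ} (hN : N ≠ 0) {δ : ℝ} (hδ : 0 < δ) (v : ℤ → ℝ) :
    Ah γ ζ δ ψ N v ≤ γ * (2 * (N * δ) + ∫ x in (0 : ℝ)..1, √(1 + deriv ψ x ^ 2)) := by
  have hf : Continuous fun x => √(1 + deriv ψ x ^ 2) := by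
    have := hψ.continuous_deriv le_rfl
    fun_prop
  have hterm : ∀ j : ℤ, ζ ((v (j - 1) - ψ (xj N (j - 1))) / δ) * ζ ((v j - ψ (xj N j)) / δ)
      * (2 * lq N v j) ≤ 2 * δ + ∫ x in xj N (j - 1)..xj N j, √(1 + deriv ψ x ^ 2) := fun j =>
    hζ.mul_mul_le_of_contact hδ (by unfold lq; positivity)
      (add_nonneg (by positivity) (intervalIntegral.integral_nonneg (xj_sub_one_le N j)
        fun _ _ => Real.sqrt_nonneg _))
      (two_mul_lq_le_of_contact hψ hN)
  unfold Ah
  gcongr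
  refine (Finset.sum_le_sum fun j _ => hterm j).trans_eq ?_
  rw [Finset.sum_add_distrib, sum_Icc_integral_xj hN hf, Finset.sum_const, Int.card_Icc]
  simp only [add_sub_cancel_right, Int.toNat_natCast, nsmul_eq_mul]
  ring

theorem stmt18_general (ψ : ℝ → ℝ) (hψ : ContDiff ℝ 1 ψ)
    (γ c₀ : ℝ) (hγ : 0 < γ) (hc₀ : 0 < c₀)
    (ζ : ℝ → ℝ) (hζ : IsRegularizer ζ)
    (N : ℕ) (hN : 1 ≤ N) (δ : ℝ) (hδpos : 0 < δ) (hδ : δ ≤ c₀ * ((1 : ℝ) / N))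
    (v : ℤ → ℝ) :
    Ah γ ζ δ ψ N v ≤
      4 * γ * ((∫ x in Set.Ioo (0 : ℝ) 1, Real.sqrt (1 + deriv ψ x ^ 2)) + c₀) := by
  have hN₀ : N ≠ 0 := by omega
  have hNδ : N * δ ≤ c₀ := by
    rwa [mul_one_div, le_div_iff₀' (by positivity)] at hδ
  rw [← integral_Ioc_eq_integral_Ioo, ← intervalIntegral.integral_of_le zero_le_one]
  have hlength : 0 ≤ ∫ x in (0 : ℝ)..1, √(1 + deriv ψ x ^ 2) :=
    intervalIntegral.integral_nonneg zero_le_one fun _ _ => Real.sqrt_nonneg _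
  calc Ah γ ζ δ ψ N v ≤ γ * (2 * (N * δ) + ∫ x in (0 : ℝ)..1, √(1 + deriv ψ x ^ 2)) :=
        Ah_le hψ hγ.le hζ hN₀ hδpos v
    _ ≤ γ * (2 * c₀ + ∫ x in (0 : ℝ)..1, √(1 + deriv ψ x ^ 2)) := by gcongr
    _ ≤ 4 * γ * ((∫ x in (0 : ℝ)..1, √(1 + deriv ψ x ^ 2)) + c₀) := by
        nlinarith [mul_nonneg hγ.le hlength, mul_nonneg hγ.le hc₀.le]

/-- Uniform bound on the discrete adhesion energy. -/
theorem stmt18 (ψ : ℝ → ℝ) (hψ : ContDiff ℝ 1 ψ) (hψper : ∀ x, ψ (x + 1) = ψ x)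
    (γ c₀ : ℝ) (hγ : 0 < γ) (hc₀ : 0 < c₀)
    (ζ : ℝ → ℝ) (hζ : IsRegularizer ζ)
    (N : ℕ) (hN : 1 ≤ N) (δ : ℝ) (hδpos : 0 < δ) (hδ : δ ≤ c₀ * ((1 : ℝ) / N))
    (v : ℤ → ℝ) (hper : ∀ j, v (j + N) = v j) :
    Ah γ ζ δ ψ N v ≤
      4 * γ * ((∫ x in Set.Ioo (0 : ℝ) 1, Real.sqrt (1 + deriv ψ x ^ 2)) + c₀) :=
  stmt18_general ψ hψ γ c₀ hγ hc₀ ζ hζ N hN δ hδpos hδ v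

end
end
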